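/- Let q ≥ 1, α_0,…,α_{q-1} ∈ (0,1], n ∈ ℕ, h = 1/n, and M_{n,q} := (1/q) Σ_{j=0}^{q-1} h^{α_j} T_n(|θ|^{2-α_j}). Then λ_min(M_{n,q}) ≤ λ_min(T_n(|θ|²)) + (h²/(3π q)) Σ_{j=0}^{q-1} α_j/(3-α_j). -/

import Mathlib

open MeasureTheory Matrix
open scoped ComplexOrder

noncomputable def tFourierCoeff (f : ℝ → ℂ) (k : ℤ) : ℂ :=
  (1 / (2 * Real.pi)) * ∫ θ in (-Real.pi)..Real.pi, f θ * Complex.exp (-Complex.I * k * θ)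

noncomputable def toeplitz (n : ℕ) (f : ℝ → ℂ) : Matrix (Fin n) (Fin n) ℂ :=
  Matrix.of fun s t => tFourierCoeff f ((s : ℤ) - (t : ℤ))

/-!
Test the Rayleigh quotient of `M_{n,q}` with a unit eigenvector `x` of `T_n(|θ|²)` for its
smallest eigenvalue. For a real symbol `g`, `x* T_n(g) x = (1/2π) ∫ g |p_x|²` with
`p_x(θ) = Σ_t x_t e^{itθ}`, and `0 ≤ |p_x|² ≤ n` by Cauchy–Schwarz. The difference symbol
`h^α |θ|^{2-α} - θ²` is nonnegative exactly on `[-h, h]`, so replacing `|p_x|²` by `n` there and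
by `0` elsewhere bounds `h^α x* T_n(|θ|^{2-α}) x - x* T_n(θ²) x` by
`(n/2π) ∫_{-h}^{h} (h^α |θ|^{2-α} - θ²) dθ = h² α / (3π(3-α))`. Averaging over `j` gives the claim.
-/

open Set

open scoped MatrixOrder in
lemma Matrix.IsHermitian.iInf_eigenvalues_le_re_dotProduct {𝕜 ι : Type*} [RCLike 𝕜]
    [Fintype ι] [DecidableEq ι] {A : Matrix ι ι 𝕜} (hA : A.IsHermitian) {x : ι → 𝕜}
    (hx : star x ⬝ᵥ x = 1) :
    ⨅ i, hA.eigenvalues i ≤ RCLike.re (star x ⬝ᵥ A *ᵥ x) := by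
  have hle : algebraMap ℝ (Matrix ι ι 𝕜) (⨅ i, hA.eigenvalues i) ≤ A := by
    rw [algebraMap_le_iff_le_spectrum (ha := hA.isSelfAdjoint),
      hA.spectrum_real_eq_range_eigenvalues]
    rintro _ ⟨i, rfl⟩
    exact ciInf_le (finite_range _).bddBelow i
  have := (Matrix.le_iff.mp hle).re_dotProduct_nonneg x
  rw [Algebra.algebraMap_eq_smul_one, sub_mulVec, smul_mulVec, one_mulVec, dotProduct_sub,
    dotProduct_smul, hx, map_sub] at this
  simpa [RCLike.smul_re] using this

lemma Matrix.IsHermitian.star_eigenvectorBasis_dotProduct_self {𝕜 ι : Type*} [RCLike 𝕜]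
    [Fintype ι] [DecidableEq ι] {A : Matrix ι ι 𝕜} (hA : A.IsHermitian) (i : ι) :
    star ⇑(hA.eigenvectorBasis i) ⬝ᵥ ⇑(hA.eigenvectorBasis i) = 1 := by
  rw [dotProduct_comm, ← EuclideanSpace.inner_eq_star_dotProduct, inner_self_eq_norm_sq_to_K,
    hA.eigenvectorBasis.orthonormal.1 i]
  simp

section TrigPoly

open Complex

noncomputable def trigPoly (n : ℕ) (x : Fin n → ℂ) (θ : ℝ) : ℂ :=
  ∑ t : Fin n, x t * exp (I * t * θ)

lemma continuous_trigPoly (n : ℕ) (x : Fin n → ℂ) : Continuous (trigPoly n x) := by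
  unfold trigPoly
  fun_prop

lemma normSq_trigPoly (n : ℕ) (x : Fin n → ℂ) (θ : ℝ) :
    (normSq (trigPoly n x θ) : ℂ) =
      ∑ s : Fin n, ∑ t : Fin n, star (x s) * x t * exp (-I * ((s : ℤ) - (t : ℤ) : ℤ) * θ) := by
  rw [normSq_eq_conj_mul_self, trigPoly, map_sum, Finset.sum_mul_sum]
  refine Finset.sum_congr rfl fun s _ => Finset.sum_congr rfl fun t _ => ?_
  rw [map_mul, ← exp_conj, mul_mul_mul_comm, ← exp_add]
  simp only [map_mul, conj_I, conj_ofReal, conj_natCast, RCLike.star_def]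
  push_cast
  ring_nf

lemma normSq_trigPoly_le (n : ℕ) (x : Fin n → ℂ) (θ : ℝ) :
    normSq (trigPoly n x θ) ≤ n * ∑ t, ‖x t‖ ^ 2 := by
  have hexp (t : Fin n) : ‖exp (I * t * θ)‖ = 1 := by
    rw [show I * t * θ = ((t * θ : ℝ) : ℂ) * I by push_cast; ring, norm_exp_ofReal_mul_I]
  calc normSq (trigPoly n x θ) = ‖trigPoly n x θ‖ ^ 2 := normSq_eq_norm_sq _
    _ ≤ (∑ t, ‖x t‖) ^ 2 := by
        gcongr
        refine (norm_sum_le _ _).trans_eq (Finset.sum_congr rfl fun t _ => ?_)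
        rw [norm_mul, hexp, mul_one]
    _ ≤ n * ∑ t, ‖x t‖ ^ 2 := by
        simpa using sq_sum_le_card_mul_sum_sq (s := Finset.univ) (f := fun t => ‖x t‖)

lemma star_dotProduct_toeplitz_mulVec (n : ℕ) {f : ℝ → ℂ}
    (hf : IntervalIntegrable f volume (-Real.pi) Real.pi) (x : Fin n → ℂ) :
    star x ⬝ᵥ toeplitz n f *ᵥ x =
      1 / (2 * Real.pi) * ∫ θ in -Real.pi..Real.pi, f θ * normSq (trigPoly n x θ) := by
  set e : Fin n → Fin n → ℝ → ℂ := fun s t θ =>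
    star (x s) * x t * (f θ * exp (-I * ((s : ℤ) - (t : ℤ) : ℤ) * θ))
  have hint (s t : Fin n) : IntervalIntegrable (e s t) volume (-Real.pi) Real.pi :=
    (hf.mul_continuousOn (by fun_prop)).const_mul _
  calc star x ⬝ᵥ toeplitz n f *ᵥ x
      = 1 / (2 * Real.pi) * ∑ s, ∑ t, ∫ θ in -Real.pi..Real.pi, e s t θ := by
        simp only [dotProduct, mulVec, toeplitz, tFourierCoeff, of_apply, Finset.mul_sum,
          e, intervalIntegral.integral_const_mul, Pi.star_apply]
        refine Finset.sum_congr rfl fun s _ => Finset.sum_congr rfl fun t _ => ?_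
        ring
    _ = 1 / (2 * Real.pi) * ∫ θ in -Real.pi..Real.pi, ∑ s, ∑ t, e s t θ := by
        rw [intervalIntegral.integral_finsetSum (f := fun s θ => ∑ t, e s t θ) fun s _ =>
          Finset.sum_fn _ (e s) ▸ IntervalIntegrable.sum _ fun t _ => hint s t]
        simp only [intervalIntegral.integral_finsetSum fun t _ => hint _ t]
    _ = _ := by
        congr 1
        refine intervalIntegral.integral_congr fun θ _ => ?_
        simp only [normSq_trigPoly, Finset.mul_sum, e]
        refine Finset.sum_congr rfl fun s _ => Finset.sum_congr rfl fun t _ => ?_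
        ring

lemma re_star_dotProduct_toeplitz_ofReal_mulVec (n : ℕ) {g : ℝ → ℝ} (hg : Continuous g)
    (x : Fin n → ℂ) :
    (star x ⬝ᵥ toeplitz n (fun θ => (g θ : ℂ)) *ᵥ x).re =
      1 / (2 * Real.pi) * ∫ θ in -Real.pi..Real.pi, g θ * normSq (trigPoly n x θ) := by
  rw [star_dotProduct_toeplitz_mulVec n
    ((by fun_prop : Continuous fun θ => (g θ : ℂ)).intervalIntegrable _ _)]
  simp_rw [← ofReal_mul, intervalIntegral.integral_ofReal]
  rw [show (1 / (2 * Real.pi) : ℂ) = ((1 / (2 * Real.pi) : ℝ) : ℂ) by push_cast; rfl,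
    ← ofReal_mul, ofReal_re]

end TrigPoly

noncomputable def diffSymbol (a h θ : ℝ) : ℝ := h ^ a * |θ| ^ (2 - a) - |θ| ^ (2 : ℝ)

section DiffSymbol

variable {a h : ℝ}

lemma diffSymbol_eq_mul (θ : ℝ) : diffSymbol a h θ = |θ| ^ (2 - a) * (h ^ a - |θ| ^ a) := by
  rw [diffSymbol, mul_sub, ← Real.rpow_add' (abs_nonneg θ) (by norm_num), sub_add_cancel,
    mul_comm]

lemma diffSymbol_neg (θ : ℝ) : diffSymbol a h (-θ) = diffSymbol a h θ := by
  simp only [diffSymbol, abs_neg]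

lemma continuous_diffSymbol (ha : a ≤ 2) : Continuous (diffSymbol a h) := by
  unfold diffSymbol
  have h2a : 0 ≤ 2 - a := by linarith
  fun_prop (disch := first | exact h2a | norm_num)

lemma diffSymbol_nonneg (ha : 0 ≤ a) {θ : ℝ} (hθ : |θ| ≤ h) : 0 ≤ diffSymbol a h θ := by
  rw [diffSymbol_eq_mul]
  exact mul_nonneg (by positivity) (sub_nonneg.mpr (Real.rpow_le_rpow (abs_nonneg θ) hθ ha))

lemma diffSymbol_nonpos (ha : 0 ≤ a) (hh : 0 ≤ h) {θ : ℝ} (hθ : h ≤ |θ|) :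
    diffSymbol a h θ ≤ 0 := by
  rw [diffSymbol_eq_mul]
  exact mul_nonpos_of_nonneg_of_nonpos (by positivity)
    (sub_nonpos.mpr (Real.rpow_le_rpow hh hθ ha))

lemma integral_diffSymbol (ha : a ≤ 2) (hh : 0 ≤ h) :
    ∫ θ in -h..h, diffSymbol a h θ = 2 * h ^ 3 * a / (3 * (3 - a)) := by
  have hcont := continuous_diffSymbol (h := h) ha
  have half : ∫ θ in (0 : ℝ)..h, diffSymbol a h θ = h ^ 3 * a / (3 * (3 - a)) := by
    have h2a : -1 < 2 - a := by linarith
    rw [intervalIntegral.integral_congr (g := fun θ => h ^ a * θ ^ (2 - a) - θ ^ (2 : ℝ))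
      fun θ hθ => by rw [diffSymbol, abs_of_nonneg (uIcc_of_le hh ▸ hθ).1],
      intervalIntegral.integral_sub, intervalIntegral.integral_const_mul,
      integral_rpow (Or.inl h2a), integral_rpow (Or.inl (by norm_num))]
    · have h3a : 3 - a ≠ 0 := by linarith
      rw [show 2 - a + 1 = 3 - a by ring, show (2 : ℝ) + 1 = 3 by norm_num,
        Real.zero_rpow h3a, Real.zero_rpow three_ne_zero, mul_div_assoc', sub_zero, sub_zero,
        ← Real.rpow_add' hh (by norm_num), add_sub_cancel, Real.rpow_ofNat]
      field_simp
      ring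
    · exact (intervalIntegral.intervalIntegrable_rpow' h2a).const_mul _
    · exact intervalIntegral.intervalIntegrable_rpow' (by norm_num)
  have hneg : ∫ θ in -h..0, diffSymbol a h θ = ∫ θ in (0 : ℝ)..h, diffSymbol a h θ := by
    simpa [diffSymbol_neg] using
      (intervalIntegral.integral_comp_neg (a := 0) (b := h) (diffSymbol a h)).symm
  rw [← intervalIntegral.integral_add_adjacent_intervals (b := 0)
    (hcont.intervalIntegrable _ _) (hcont.intervalIntegrable _ _), hneg, half]
  ring

end DiffSymbol

lemma integral_mul_le_of_nonpos_outside {D w : ℝ → ℝ} {a b c d N : ℝ}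
    (hac : a ≤ c) (hcd : c ≤ d) (hdb : d ≤ b) (hD : Continuous D) (hw : Continuous w)
    (hw0 : ∀ θ, 0 ≤ w θ) (hwN : ∀ θ, w θ ≤ N) (hD_mid : ∀ θ ∈ Icc c d, 0 ≤ D θ)
    (hD_left : ∀ θ ∈ Icc a c, D θ ≤ 0) (hD_right : ∀ θ ∈ Icc d b, D θ ≤ 0) :
    ∫ θ in a..b, D θ * w θ ≤ N * ∫ θ in c..d, D θ := by
  have hDw (u v : ℝ) : IntervalIntegrable (fun θ => D θ * w θ) volume u v :=
    (hD.mul hw).intervalIntegrable u v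
  have hnonpos {u v : ℝ} (huv : u ≤ v) (hneg : ∀ θ ∈ Icc u v, D θ ≤ 0) :
      ∫ θ in u..v, D θ * w θ ≤ 0 :=
    (intervalIntegral.integral_mono_on huv (hDw u v) intervalIntegrable_const fun θ hθ =>
      mul_nonpos_of_nonpos_of_nonneg (hneg θ hθ) (hw0 θ)).trans_eq (by simp)
  have hmid : ∫ θ in c..d, D θ * w θ ≤ ∫ θ in c..d, N * D θ :=
    intervalIntegral.integral_mono_on hcd (hDw c d)
      ((continuous_const.mul hD).intervalIntegrable _ _) fun θ hθ => by
        rw [mul_comm N]; exact mul_le_mul_of_nonneg_left (hwN θ) (hD_mid θ hθ)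
  rw [← intervalIntegral.integral_add_adjacent_intervals (hDw a c) (hDw c b),
    ← intervalIntegral.integral_add_adjacent_intervals (hDw c d) (hDw d b),
    ← intervalIntegral.integral_const_mul]
  linarith [hnonpos hac hD_left, hnonpos hdb hD_right]

lemma integral_diffSymbol_mul_le {a h N : ℝ} {w : ℝ → ℝ} (ha0 : 0 ≤ a) (ha2 : a ≤ 2)
    (hh : 0 ≤ h) (hhπ : h ≤ Real.pi) (hw : Continuous w) (hw0 : ∀ θ, 0 ≤ w θ)
    (hwN : ∀ θ, w θ ≤ N) :
    ∫ θ in -Real.pi..Real.pi, diffSymbol a h θ * w θ ≤ N * (2 * h ^ 3 * a / (3 * (3 - a))) := by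
  rw [← integral_diffSymbol ha2 hh]
  refine integral_mul_le_of_nonpos_outside (by linarith) (by linarith) hhπ
    (continuous_diffSymbol ha2) hw hw0 hwN (fun θ hθ => diffSymbol_nonneg ha0 (abs_le.mpr hθ))
    (fun θ hθ => diffSymbol_nonpos ha0 hh ?_) (fun θ hθ => diffSymbol_nonpos ha0 hh ?_)
  · rw [abs_of_nonpos (by linarith [hθ.2])]; linarith [hθ.2]
  · rw [abs_of_nonneg (by linarith [hθ.1])]; exact hθ.1

lemma re_star_dotProduct_toeplitz_rpow_le {n : ℕ} {a h : ℝ} (ha0 : 0 ≤ a) (ha2 : a ≤ 2)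
    (hh : 0 ≤ h) (hhπ : h ≤ Real.pi) {x : Fin n → ℂ} (hx : star x ⬝ᵥ x = 1) :
    h ^ a * (star x ⬝ᵥ toeplitz n (fun θ => ((|θ| ^ (2 - a) : ℝ) : ℂ)) *ᵥ x).re ≤
      (star x ⬝ᵥ toeplitz n (fun θ => ((|θ| ^ (2 : ℝ) : ℝ) : ℂ)) *ᵥ x).re +
        n * h ^ 3 / (3 * Real.pi) * (a / (3 - a)) := by
  have hxx : ∑ t, ‖x t‖ ^ 2 = 1 := by
    have := congrArg Complex.re hx
    simp only [dotProduct, Pi.star_apply, RCLike.star_def, Complex.conj_mul'] at this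
    exact_mod_cast this
  set w : ℝ → ℝ := fun θ => Complex.normSq (trigPoly n x θ)
  have hw : Continuous w := Complex.continuous_normSq.comp (continuous_trigPoly n x)
  have hwn (θ : ℝ) : w θ ≤ n := by simpa [hxx] using normSq_trigPoly_le n x θ
  have hbound := integral_diffSymbol_mul_le ha0 ha2 hh hhπ hw (fun θ => Complex.normSq_nonneg _) hwn
  have hsplit : ∫ θ in -Real.pi..Real.pi, diffSymbol a h θ * w θ =
      h ^ a * (∫ θ in -Real.pi..Real.pi, |θ| ^ (2 - a) * w θ) -
        ∫ θ in -Real.pi..Real.pi, |θ| ^ (2 : ℝ) * w θ := by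
    simp only [diffSymbol, sub_mul, mul_assoc]
    rw [intervalIntegral.integral_sub, intervalIntegral.integral_const_mul]
    all_goals exact Continuous.intervalIntegrable (by fun_prop (disch := linarith)) _ _
  rw [re_star_dotProduct_toeplitz_ofReal_mulVec n (g := fun θ => |θ| ^ (2 - a))
      (by fun_prop (disch := linarith)),
    re_star_dotProduct_toeplitz_ofReal_mulVec n (g := fun θ => |θ| ^ (2 : ℝ))
      (by fun_prop (disch := norm_num))]
  calc h ^ a * (1 / (2 * Real.pi) * ∫ θ in -Real.pi..Real.pi, |θ| ^ (2 - a) * w θ)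
      = 1 / (2 * Real.pi) * (∫ θ in -Real.pi..Real.pi, diffSymbol a h θ * w θ) +
          1 / (2 * Real.pi) * ∫ θ in -Real.pi..Real.pi, |θ| ^ (2 : ℝ) * w θ := by
        rw [hsplit]; ring
    _ ≤ 1 / (2 * Real.pi) * (n * (2 * h ^ 3 * a / (3 * (3 - a)))) +
          1 / (2 * Real.pi) * ∫ θ in -Real.pi..Real.pi, |θ| ^ (2 : ℝ) * w θ := by
        gcongr
    _ = _ := by
        field_simp
        ring

theorem lambda_min_average_bound
    (q : ℕ) (hq : 1 ≤ q) (α : Fin q → ℝ) (hα : ∀ j, α j ∈ Set.Ioc (0 : ℝ) 1)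
    (n : ℕ) (hn : 0 < n) (h : ℝ) (hh : h = 1 / n)
    (M : Matrix (Fin n) (Fin n) ℂ)
    (hMdef : M = ((1 : ℝ) / q) • ∑ j : Fin q,
      (h ^ (α j) : ℝ) • toeplitz n (fun θ => ((|θ| ^ (2 - α j) : ℝ) : ℂ)))
    (hM : M.IsHermitian)
    (hT : (toeplitz n (fun θ => ((|θ| ^ (2 : ℝ) : ℝ) : ℂ))).IsHermitian) :
    ⨅ i, hM.eigenvalues i ≤ ⨅ i, hT.eigenvalues i +
      (h ^ 2 / (3 * Real.pi * q)) * ∑ j : Fin q, α j / (3 - α j) := by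
  have : Nonempty (Fin n) := Fin.pos_iff_nonempty.mp hn
  obtain ⟨i₀, hi₀⟩ := Finite.exists_min hT.eigenvalues
  set x : Fin n → ℂ := ⇑(hT.eigenvectorBasis i₀)
  have hx : star x ⬝ᵥ x = 1 := hT.star_eigenvectorBasis_dotProduct_self i₀
  have hh0 : 0 ≤ h := by rw [hh]; positivity
  have hhπ : h ≤ Real.pi := by
    rw [hh]
    exact (div_le_one_of_le₀ (Nat.one_le_cast.mpr hn) (by positivity)).trans
      (by linarith [Real.pi_gt_three])
  calc ⨅ i, hM.eigenvalues i ≤ (star x ⬝ᵥ M *ᵥ x).re := hM.iInf_eigenvalues_le_re_dotProduct hx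
    _ = 1 / q * ∑ j, h ^ α j *
          (star x ⬝ᵥ toeplitz n (fun θ => ((|θ| ^ (2 - α j) : ℝ) : ℂ)) *ᵥ x).re := by
        simp [hMdef, Matrix.sum_mulVec, dotProduct_sum, smul_mulVec, dotProduct_smul]
    _ ≤ 1 / q * ∑ j, ((star x ⬝ᵥ toeplitz n (fun θ => ((|θ| ^ (2 : ℝ) : ℝ) : ℂ)) *ᵥ x).re +
          n * h ^ 3 / (3 * Real.pi) * (α j / (3 - α j))) := by
        gcongr with j
        exact re_star_dotProduct_toeplitz_rpow_le (hα j).1.le (by linarith [(hα j).2]) hh0 hhπ hx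
    _ = hT.eigenvalues i₀ + (h ^ 2 / (3 * Real.pi * q)) * ∑ j : Fin q, α j / (3 - α j) := by
        rw [hT.eigenvalues_eq i₀, RCLike.re_to_complex, Finset.sum_add_distrib, Finset.sum_const,
          Finset.card_univ, Fintype.card_fin, nsmul_eq_mul, ← Finset.mul_sum, hh]
        field_simp
        ring
    -- `⨅ i` scopes over the whole sum: the right-hand side is `⨅ i, (λ_i + c)`.
    _ ≤ ⨅ i, hT.eigenvalues i + (h ^ 2 / (3 * Real.pi * q)) * ∑ j : Fin q, α j / (3 - α j) :=
        le_ciInf fun i => add_le_add_left (hi₀ i) _
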